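/- arXiv:1707.01311 — 3 statements merged into one kernel-verified Lean document; each statement's English description precedes it below -/
import Mathlib

section
/- Let H be an invertible m×m real matrix, H̄ := HH', Ω̂ an m×m positive semidefinite symmetric real matrix, T an m×m real matrix, and d, λ̂ ∈ ℝ^m. Set M := H'Ω̂H + I_m (which is positive definite), m₊ := λ̂ − Ω̂d, Ω := T'(I_m − Ω̂HM⁻¹H')Ω̂T and λ := T'(I_m − Ω̂HM⁻¹H')m₊. Then Ω is positive semidefinite and there exists a constant C > 0, independent of z, such that for all z ∈ ℝ^m: ∫_{ℝ^m} φ_{d+Tz, H̄}(w) exp(−½ w'Ω̂w + λ̂'w) dw = C · exp(−½ z'Ωz + λ'z). (This is the one-step backward recursion of the Rao-Blackwellized FFBS smoother.) -/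
/-!
Multiplying `φ_{μ,Σ}(w)` by `exp(−½ w'Ω̂w + λ̂'w)` gives `exp(−½ μ'Σ⁻¹μ)` times the exponential
of a quadratic in `w` with precision `A = Σ⁻¹ + Ω̂` and linear term `b = Σ⁻¹μ + λ̂`; completing the
square integrates it to a constant times `exp(½ b'A⁻¹b)`. Expanding, the integral is a constant
times `exp(−½ μ'PΩ̂μ + μ'Pλ̂)` with `P = Σ⁻¹A⁻¹`, since `Σ⁻¹ − Σ⁻¹A⁻¹Σ⁻¹ = Σ⁻¹A⁻¹(A − Σ⁻¹)`.
For `Σ = HH'` we have `A = H'⁻¹MH⁻¹`, so `P = H'⁻¹M⁻¹H' = I − Ω̂HM⁻¹H'` and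
`PΩ̂ = H'⁻¹(I − M⁻¹)H⁻¹`, which is positive semidefinite because `M ≥ I`.
Substituting `μ = d + Tz` gives the claim.
-/

open MeasureTheory Matrix Real

/-- Gaussian density on `ℝ^k` with mean `μ` and covariance `S`. -/
noncomputable def gaussPdf {k : ℕ} (μ : Fin k → ℝ) (S : Matrix (Fin k) (Fin k) ℝ)
    (x : Fin k → ℝ) : ℝ :=
  ((2 * π) ^ (k : ℝ) * S.det) ^ (-(1 : ℝ) / 2) *
    Real.exp (-(1 / 2 : ℝ) * ((x - μ) ⬝ᵥ (S⁻¹ *ᵥ (x - μ))))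

lemma mulVec_dotProduct {m n α : Type*} [Fintype m] [Fintype n] [CommSemiring α]
    (B : Matrix m n α) (x : n → α) (y : m → α) : (B *ᵥ x) ⬝ᵥ y = x ⬝ᵥ Bᵀ *ᵥ y := by
  rw [dotProduct_transpose_mulVec, dotProduct_comm]

section QuadraticForm

variable {ι : Type*} [Fintype ι]

lemma add_dotProduct_mulVec_add {A : Matrix ι ι ℝ} (hA : Aᵀ = A) (x y : ι → ℝ) :
    (x + y) ⬝ᵥ A *ᵥ (x + y) = x ⬝ᵥ A *ᵥ x + 2 * ((A *ᵥ x) ⬝ᵥ y) + y ⬝ᵥ A *ᵥ y := by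
  have hxy : x ⬝ᵥ A *ᵥ y = (A *ᵥ x) ⬝ᵥ y := by rw [mulVec_dotProduct, hA]
  have hyx : y ⬝ᵥ A *ᵥ x = (A *ᵥ x) ⬝ᵥ y := dotProduct_comm _ _
  simp only [mulVec_add, dotProduct_add, add_dotProduct, hxy, hyx]
  ring

lemma sub_dotProduct_mulVec_sub {A : Matrix ι ι ℝ} (hA : Aᵀ = A) (x y : ι → ℝ) :
    (x - y) ⬝ᵥ A *ᵥ (x - y) = x ⬝ᵥ A *ᵥ x - 2 * ((A *ᵥ y) ⬝ᵥ x) + y ⬝ᵥ A *ᵥ y := by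
  have hxy : x ⬝ᵥ A *ᵥ y = (A *ᵥ y) ⬝ᵥ x := dotProduct_comm _ _
  have hyx : y ⬝ᵥ A *ᵥ x = (A *ᵥ y) ⬝ᵥ x := by rw [mulVec_dotProduct, hA]
  simp only [mulVec_sub, dotProduct_sub, sub_dotProduct, hxy, hyx]
  ring

lemma neg_half_quadForm_add_half_quadForm_add_eq [DecidableEq ι] {Si Ω K : Matrix ι ι ℝ}
    (hSi : Siᵀ = Si) (hK : Kᵀ = K) (hKA : K * (Si + Ω) = 1) (μ lam : ι → ℝ) :
    -(1 / 2) * (μ ⬝ᵥ Si *ᵥ μ) + 1 / 2 * ((Si *ᵥ μ + lam) ⬝ᵥ K *ᵥ (Si *ᵥ μ + lam)) =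
      -(1 / 2) * (μ ⬝ᵥ (Si * K * Ω) *ᵥ μ) + μ ⬝ᵥ (Si * K) *ᵥ lam +
        1 / 2 * (lam ⬝ᵥ K *ᵥ lam) := by
  have hSKΩ : Si * K * Ω = Si - Si * K * Si := by
    rw [eq_sub_iff_add_eq, ← mul_add, add_comm Ω, mul_assoc, hKA, mul_one]
  have hquad : (Si *ᵥ μ) ⬝ᵥ K *ᵥ (Si *ᵥ μ) = μ ⬝ᵥ (Si * K * Si) *ᵥ μ := by
    rw [mulVec_dotProduct, hSi, mulVec_mulVec, mulVec_mulVec]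
  have hcross : (K *ᵥ (Si *ᵥ μ)) ⬝ᵥ lam = μ ⬝ᵥ (Si * K) *ᵥ lam := by
    rw [mulVec_dotProduct, mulVec_dotProduct, hK, hSi, mulVec_mulVec]
  rw [add_dotProduct_mulVec_add hK, hquad, hcross, hSKΩ, sub_mulVec, dotProduct_sub]
  ring

lemma neg_half_quadForm_add_dotProduct_comp_affine {κ : Type*} [Fintype κ] {N : Matrix ι ι ℝ}
    (hN : Nᵀ = N) (T : Matrix ι κ ℝ) (d v : ι → ℝ) (z : κ → ℝ) :
    -(1 / 2) * ((d + T *ᵥ z) ⬝ᵥ N *ᵥ (d + T *ᵥ z)) + (d + T *ᵥ z) ⬝ᵥ v =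
      (-(1 / 2) * (d ⬝ᵥ N *ᵥ d) + d ⬝ᵥ v) +
        (-(1 / 2) * (z ⬝ᵥ (Tᵀ * N * T) *ᵥ z) + (Tᵀ *ᵥ (v - N *ᵥ d)) ⬝ᵥ z) := by
  have hquad : (T *ᵥ z) ⬝ᵥ N *ᵥ (T *ᵥ z) = z ⬝ᵥ (Tᵀ * N * T) *ᵥ z := by
    rw [mulVec_dotProduct, mulVec_mulVec, mulVec_mulVec]
  have hcross : (N *ᵥ d) ⬝ᵥ (T *ᵥ z) = z ⬝ᵥ Tᵀ *ᵥ (N *ᵥ d) := by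
    rw [dotProduct_comm, mulVec_dotProduct]
  have hlin : (Tᵀ *ᵥ (v - N *ᵥ d)) ⬝ᵥ z = z ⬝ᵥ Tᵀ *ᵥ v - z ⬝ᵥ Tᵀ *ᵥ (N *ᵥ d) := by
    rw [dotProduct_comm, mulVec_sub, dotProduct_sub]
  rw [add_dotProduct_mulVec_add hN, hquad, hcross, hlin, add_dotProduct, mulVec_dotProduct T z v]
  ring

end QuadraticForm

section GaussianIntegral

variable {ι : Type*} [Fintype ι]

lemma integral_exp_neg_half_dotProduct_self :
    ∫ u : ι → ℝ, exp (-(1 / 2) * (u ⬝ᵥ u)) = √(2 * π) ^ Fintype.card ι := by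
  have hprod : ∀ u : ι → ℝ, exp (-(1 / 2) * (u ⬝ᵥ u)) = ∏ i, exp (-(1 / 2) * u i ^ 2) := by
    intro u
    rw [← exp_sum, dotProduct, Finset.mul_sum]
    simp only [sq]
  simp_rw [hprod]
  rw [volume_pi, integral_fintype_prod_eq_pow (fun x : ℝ => exp (-(1 / 2) * x ^ 2)),
    integral_gaussian]
  norm_num [div_eq_mul_inv, mul_comm]

open scoped MatrixOrder in
lemma integral_exp_neg_half_quadForm_pos [DecidableEq ι] {A : Matrix ι ι ℝ} (hA : A.PosDef) :
    0 < ∫ v : ι → ℝ, exp (-(1 / 2) * (v ⬝ᵥ A *ᵥ v)) := by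
  set B := CFC.sqrt A
  have hBt : Bᵀ = B := (CFC.sqrt_nonneg A).posSemidef.isHermitian.eq
  have hBB : B * B = A := CFC.sqrt_mul_sqrt_self A hA.posSemidef.nonneg
  have hB : B.det ≠ 0 := fun h => hA.det_pos.ne' (by rw [← hBB, det_mul, h, zero_mul])
  have hquad : ∀ v : ι → ℝ, v ⬝ᵥ A *ᵥ v = toLin' B v ⬝ᵥ toLin' B v := fun v => by
    rw [toLin'_apply, ← hBB, ← mulVec_mulVec, ← dotProduct_transpose_mulVec, hBt]
  have hcont : Continuous fun u : ι → ℝ => exp (-(1 / 2) * (u ⬝ᵥ u)) := by fun_prop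
  -- The substitution `u = √A v` turns the integral into a standard Gaussian one, with no
  -- integrability side condition.
  have hchange : ∫ v : ι → ℝ, exp (-(1 / 2) * (v ⬝ᵥ A *ᵥ v)) =
      |B.det⁻¹| * √(2 * π) ^ Fintype.card ι := by
    simp_rw [hquad]
    rw [← integral_map (LinearMap.continuous_of_finiteDimensional _).aemeasurable
      hcont.aestronglyMeasurable, Real.map_matrix_volume_pi_eq_smul_volume_pi hB,
      integral_smul_measure, integral_exp_neg_half_dotProduct_self,
      ENNReal.toReal_ofReal (abs_nonneg _), smul_eq_mul]
  rw [hchange]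
  have := abs_pos.mpr (inv_ne_zero hB)
  positivity

lemma integral_exp_neg_half_quadForm_add_dotProduct [DecidableEq ι] {A : Matrix ι ι ℝ}
    (hA : A.PosDef) (b : ι → ℝ) :
    ∫ w : ι → ℝ, exp (-(1 / 2) * (w ⬝ᵥ A *ᵥ w) + b ⬝ᵥ w) =
      (∫ v : ι → ℝ, exp (-(1 / 2) * (v ⬝ᵥ A *ᵥ v))) * exp (1 / 2 * (b ⬝ᵥ A⁻¹ *ᵥ b)) := by
  have hAt : Aᵀ = A := hA.isHermitian.eq
  set a := A⁻¹ *ᵥ b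
  have hAa : A *ᵥ a = b := by
    rw [mulVec_mulVec, mul_nonsing_inv _ hA.det_pos.ne'.isUnit, one_mulVec]
  have hsq : ∀ w : ι → ℝ, -(1 / 2) * (w ⬝ᵥ A *ᵥ w) + b ⬝ᵥ w =
      -(1 / 2) * ((w - a) ⬝ᵥ A *ᵥ (w - a)) + 1 / 2 * (b ⬝ᵥ a) := fun w => by
    rw [sub_dotProduct_mulVec_sub hAt, hAa, dotProduct_comm a b]
    ring
  simp_rw [hsq, exp_add, integral_mul_const,
    integral_sub_right_eq_self (fun v => exp (-(1 / 2) * (v ⬝ᵥ A *ᵥ v))) a]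

end GaussianIntegral

lemma gaussPdf_mul_exp_quadForm {k : ℕ} (μ : Fin k → ℝ) {S : Matrix (Fin k) (Fin k) ℝ}
    (hS : Sᵀ = S) (Ω : Matrix (Fin k) (Fin k) ℝ) (lam w : Fin k → ℝ) :
    gaussPdf μ S w * exp (-(1 / 2) * (w ⬝ᵥ Ω *ᵥ w) + lam ⬝ᵥ w) =
      ((2 * π) ^ (k : ℝ) * S.det) ^ (-(1 : ℝ) / 2) * exp (-(1 / 2) * (μ ⬝ᵥ S⁻¹ *ᵥ μ)) *
        exp (-(1 / 2) * (w ⬝ᵥ (S⁻¹ + Ω) *ᵥ w) + (S⁻¹ *ᵥ μ + lam) ⬝ᵥ w) := by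
  have hSinv : S⁻¹ᵀ = S⁻¹ := by rw [transpose_nonsing_inv, hS]
  rw [gaussPdf, mul_assoc, mul_assoc, ← exp_add, ← exp_add, sub_dotProduct_mulVec_sub hSinv,
    add_mulVec, dotProduct_add, add_dotProduct]
  ring_nf

theorem exists_integral_gaussPdf_mul_exp_quadForm_eq {k : ℕ} {S Ω : Matrix (Fin k) (Fin k) ℝ}
    (hS : S.PosDef) (hΩ : Ω.PosSemidef) (lam : Fin k → ℝ) :
    ∃ C : ℝ, 0 < C ∧ ∀ μ : Fin k → ℝ,
      ∫ w, gaussPdf μ S w * exp (-(1 / 2) * (w ⬝ᵥ Ω *ᵥ w) + lam ⬝ᵥ w) =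
        C * exp (-(1 / 2) * (μ ⬝ᵥ (S⁻¹ * (S⁻¹ + Ω)⁻¹ * Ω) *ᵥ μ) +
          μ ⬝ᵥ (S⁻¹ * (S⁻¹ + Ω)⁻¹) *ᵥ lam) := by
  have hA : (S⁻¹ + Ω).PosDef := hS.inv.add_posSemidef hΩ
  set K := (S⁻¹ + Ω)⁻¹
  have hKA : K * (S⁻¹ + Ω) = 1 := nonsing_inv_mul _ hA.det_pos.ne'.isUnit
  set c := ((2 * π) ^ (k : ℝ) * S.det) ^ (-(1 : ℝ) / 2)
  have hc : 0 < c := rpow_pos_of_pos (mul_pos (by positivity) hS.det_pos) _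
  set J := ∫ v : Fin k → ℝ, exp (-(1 / 2) * (v ⬝ᵥ (S⁻¹ + Ω) *ᵥ v))
  have hJ : 0 < J := integral_exp_neg_half_quadForm_pos hA
  refine ⟨c * J * exp (1 / 2 * (lam ⬝ᵥ K *ᵥ lam)), by positivity, fun μ => ?_⟩
  have hSt : Sᵀ = S := hS.isHermitian.eq
  have hSinvt : S⁻¹ᵀ = S⁻¹ := hS.inv.isHermitian.eq
  have hKt : Kᵀ = K := hA.inv.isHermitian.eq
  simp_rw [gaussPdf_mul_exp_quadForm μ hSt, integral_const_mul,
    integral_exp_neg_half_quadForm_add_dotProduct hA]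
  calc c * exp (-(1 / 2) * (μ ⬝ᵥ S⁻¹ *ᵥ μ)) *
        (J * exp (1 / 2 * ((S⁻¹ *ᵥ μ + lam) ⬝ᵥ K *ᵥ (S⁻¹ *ᵥ μ + lam))))
      = c * J * exp (-(1 / 2) * (μ ⬝ᵥ S⁻¹ *ᵥ μ) +
          1 / 2 * ((S⁻¹ *ᵥ μ + lam) ⬝ᵥ K *ᵥ (S⁻¹ *ᵥ μ + lam))) := by
        rw [exp_add]; ring
    _ = _ := by
        rw [neg_half_quadForm_add_half_quadForm_add_eq hSinvt hKt hKA, exp_add]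
        ring

section FactoredCovariance

variable {ι : Type*} [Fintype ι] [DecidableEq ι] {H Ω : Matrix ι ι ℝ}

lemma posDef_transpose_mul_mul_add_one (hΩ : Ω.PosSemidef) : (Hᵀ * Ω * H + 1).PosDef :=
  PosDef.posSemidef_add (hΩ.conjTranspose_mul_mul_same H) .one

lemma posDef_mul_transpose_self (hH : IsUnit H.det) : (H * Hᵀ).PosDef :=
  .mul_conjTranspose_self H (vecMul_injective_iff_isUnit.mpr ((isUnit_iff_isUnit_det H).mpr hH))

lemma inv_mul_transpose_add_eq (hH : IsUnit H.det) :
    (H * Hᵀ)⁻¹ + Ω = Hᵀ⁻¹ * (Hᵀ * Ω * H + 1) * H⁻¹ := by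
  have hHt : IsUnit Hᵀ.det := by rwa [det_transpose]
  rw [Matrix.mul_inv_rev, mul_add, add_mul, mul_one, mul_assoc, mul_assoc, mul_nonsing_inv _ hH,
    mul_one, nonsing_inv_mul_cancel_left _ _ hHt, add_comm]

lemma inv_inv_mul_transpose_add_eq (hH : IsUnit H.det) :
    ((H * Hᵀ)⁻¹ + Ω)⁻¹ = H * (Hᵀ * Ω * H + 1)⁻¹ * Hᵀ := by
  have hHt : IsUnit Hᵀ.det := by rwa [det_transpose]
  rw [inv_mul_transpose_add_eq hH, Matrix.mul_inv_rev, Matrix.mul_inv_rev,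
    nonsing_inv_nonsing_inv _ hH, nonsing_inv_nonsing_inv _ hHt, ← mul_assoc]

lemma posSemidef_one_sub_inv_add_one {X : Matrix ι ι ℝ} (hX : X.PosSemidef) :
    (1 - (X + 1)⁻¹).PosSemidef := by
  have hM : (X + 1).PosDef := PosDef.posSemidef_add hX .one
  set M := X + 1 with hMdef
  have hMinv : M⁻¹ᴴ = M⁻¹ := hM.inv.isHermitian.eq
  have hXM : X + Xᴴ * X = X * M := by rw [hX.isHermitian.eq, hMdef, mul_add, mul_one, add_comm]
  have hXM1 : X = M - 1 := (add_sub_cancel_right X 1).symm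
  have hfactor : 1 - M⁻¹ = M⁻¹ᴴ * (X + Xᴴ * X) * M⁻¹ := by
    rw [hMinv, hXM, mul_assoc, mul_assoc, mul_nonsing_inv _ hM.det_pos.ne'.isUnit, mul_one, hXM1,
      Matrix.mul_sub, nonsing_inv_mul _ hM.det_pos.ne'.isUnit, Matrix.mul_one]
  rw [hfactor]
  exact (hX.add (posSemidef_conjTranspose_mul_self X)).conjTranspose_mul_mul_same M⁻¹

lemma one_sub_mul_inv_mul_eq (hH : IsUnit H.det) (hM : IsUnit (Hᵀ * Ω * H + 1).det) :
    1 - Ω * H * (Hᵀ * Ω * H + 1)⁻¹ * Hᵀ = Hᵀ⁻¹ * ((Hᵀ * Ω * H + 1)⁻¹ * Hᵀ) := by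
  set M := Hᵀ * Ω * H + 1
  have hHt : IsUnit Hᵀ.det := by rwa [det_transpose]
  have hX : Hᵀ * Ω * H = M - 1 := (add_sub_cancel_right _ _).symm
  refine (nonsing_inv_mul_cancel_left Hᵀ _ hHt).symm.trans (congrArg (Hᵀ⁻¹ * ·) ?_)
  calc Hᵀ * (1 - Ω * H * M⁻¹ * Hᵀ) = Hᵀ - Hᵀ * Ω * H * M⁻¹ * Hᵀ := by
        simp only [Matrix.mul_sub, Matrix.mul_one, Matrix.mul_assoc]
    _ = M⁻¹ * Hᵀ := by
        rw [hX, Matrix.sub_mul, Matrix.sub_mul, mul_nonsing_inv _ hM, Matrix.one_mul,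
          Matrix.one_mul, sub_sub_cancel]

lemma inv_mul_inv_add_eq (hH : IsUnit H.det) (hM : IsUnit (Hᵀ * Ω * H + 1).det) :
    (H * Hᵀ)⁻¹ * ((H * Hᵀ)⁻¹ + Ω)⁻¹ = 1 - Ω * H * (Hᵀ * Ω * H + 1)⁻¹ * Hᵀ := by
  rw [inv_inv_mul_transpose_add_eq hH, one_sub_mul_inv_mul_eq hH hM, Matrix.mul_inv_rev]
  simp only [Matrix.mul_assoc, nonsing_inv_mul_cancel_left _ _ hH]

lemma one_sub_mul_inv_mul_mul_eq (hH : IsUnit H.det) (hM : IsUnit (Hᵀ * Ω * H + 1).det) :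
    (1 - Ω * H * (Hᵀ * Ω * H + 1)⁻¹ * Hᵀ) * Ω = H⁻¹ᵀ * (1 - (Hᵀ * Ω * H + 1)⁻¹) * H⁻¹ := by
  rw [one_sub_mul_inv_mul_eq hH hM]
  set M := Hᵀ * Ω * H + 1
  have hX : Hᵀ * Ω * H = M - 1 := (add_sub_cancel_right _ _).symm
  calc Hᵀ⁻¹ * (M⁻¹ * Hᵀ) * Ω = Hᵀ⁻¹ * (M⁻¹ * (Hᵀ * Ω * H)) * H⁻¹ := by
        simp only [Matrix.mul_assoc, mul_nonsing_inv _ hH, Matrix.mul_one]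
    _ = H⁻¹ᵀ * (1 - M⁻¹) * H⁻¹ := by
        rw [hX, Matrix.mul_sub, nonsing_inv_mul _ hM, Matrix.mul_one, transpose_nonsing_inv]

lemma posSemidef_one_sub_mul_inv_mul_mul (hH : IsUnit H.det) (hΩ : Ω.PosSemidef) :
    ((1 - Ω * H * (Hᵀ * Ω * H + 1)⁻¹ * Hᵀ) * Ω).PosSemidef := by
  rw [one_sub_mul_inv_mul_mul_eq hH (posDef_transpose_mul_mul_add_one hΩ).det_pos.ne'.isUnit]
  exact (posSemidef_one_sub_inv_add_one
    (hΩ.conjTranspose_mul_mul_same H)).conjTranspose_mul_mul_same H⁻¹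

end FactoredCovariance

/-- **One-step backward recursion of the Rao-Blackwellized FFBS smoother.**
With `H̄ = HH'`, `M = H'Ω̂H + I` (positive definite), `m₊ = λ̂ − Ω̂d`,
`Ω = T'(I − Ω̂HM⁻¹H')Ω̂T` and `λ = T'(I − Ω̂HM⁻¹H')m₊`, the matrix `Ω` is positive
semidefinite and there is a constant `C > 0` with
`∫ φ_{d+Tz,H̄}(w) exp(−½ w'Ω̂w + λ̂'w) dw = C exp(−½ z'Ωz + λ'z)` for all `z`. -/
theorem ffbs_backward_recursion_step {m : ℕ} (H : Matrix (Fin m) (Fin m) ℝ)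
    (hH : IsUnit H.det) (Ωh : Matrix (Fin m) (Fin m) ℝ) (hΩh : Ωh.PosSemidef)
    (T : Matrix (Fin m) (Fin m) ℝ) (d lamh : Fin m → ℝ) :
    (Hᵀ * Ωh * H + 1).PosDef ∧
    (Tᵀ * (1 - Ωh * H * (Hᵀ * Ωh * H + 1)⁻¹ * Hᵀ) * Ωh * T).PosSemidef ∧
    ∃ C : ℝ, 0 < C ∧ ∀ z : Fin m → ℝ,
      (∫ w : Fin m → ℝ,
          gaussPdf (d + T *ᵥ z) (H * Hᵀ) w *
            Real.exp (-(1 / 2 : ℝ) * (w ⬝ᵥ (Ωh *ᵥ w)) + lamh ⬝ᵥ w)) =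
        C * Real.exp (-(1 / 2 : ℝ) *
            (z ⬝ᵥ ((Tᵀ * (1 - Ωh * H * (Hᵀ * Ωh * H + 1)⁻¹ * Hᵀ) * Ωh * T) *ᵥ z)) +
          (Tᵀ *ᵥ ((1 - Ωh * H * (Hᵀ * Ωh * H + 1)⁻¹ * Hᵀ) *ᵥ (lamh - Ωh *ᵥ d))) ⬝ᵥ z) := by
  have hM : (Hᵀ * Ωh * H + 1).PosDef := posDef_transpose_mul_mul_add_one hΩh
  obtain ⟨C, hC, hint⟩ :=
    exists_integral_gaussPdf_mul_exp_quadForm_eq (posDef_mul_transpose_self hH) hΩh lamh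
  rw [inv_mul_inv_add_eq hH hM.det_pos.ne'.isUnit] at hint
  set P := 1 - Ωh * H * (Hᵀ * Ωh * H + 1)⁻¹ * Hᵀ
  have hN : (P * Ωh).PosSemidef := posSemidef_one_sub_mul_inv_mul_mul hH hΩh
  have hNt : (P * Ωh)ᵀ = P * Ωh := hN.isHermitian.eq
  refine ⟨hM, by simpa only [Matrix.mul_assoc, conjTranspose_eq_transpose_of_trivial] using
    hN.conjTranspose_mul_mul_same T, ?_⟩
  refine ⟨C * exp (-(1 / 2) * (d ⬝ᵥ (P * Ωh) *ᵥ d) + d ⬝ᵥ P *ᵥ lamh), by positivity, fun z => ?_⟩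
  rw [hint, neg_half_quadForm_add_dotProduct_comp_affine hNt T d, exp_add, ← mul_assoc]
  simp only [Matrix.mul_assoc, mulVec_sub, ← mulVec_mulVec]
end

section
/- Let w_1,…,w_M be strictly positive real numbers and let N be a real number with 0 < N < M. Then there exists λ > 0 such that Σ_{i=1}^M min(w_i/λ, 1) = N. (Existence of the threshold λ in the Kullback-Leibler Optimal Selection (KL-OS) resampling scheme.) -/
/-- **Existence of the KL-OS threshold.**  For strictly positive weights `w_1,…,w_M` and
`0 < N < M` there is `λ > 0` with `Σ_i min(w_i/λ, 1) = N`. -/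
theorem klos_threshold_exists {M : ℕ} (w : Fin M → ℝ) (hw : ∀ i, 0 < w i)
    (N : ℝ) (hN0 : 0 < N) (hNM : N < M) :
    ∃ lam : ℝ, 0 < lam ∧ (∑ i, min (w i / lam) 1) = N := by
  have hM : 0 < M := by
    by_contra h
    push_neg at h
    interval_cases M
    · exact absurd hNM (by simpa using hN0.le)
  haveI : Nonempty (Fin M) := ⟨⟨0, hM⟩⟩
  have hne : (Finset.univ : Finset (Fin M)).Nonempty := Finset.univ_nonempty
  set a : ℝ := Finset.univ.inf' hne w with ha_def
  have ha_pos : 0 < a := by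
    rw [ha_def, Finset.lt_inf'_iff]
    exact fun i _ => hw i
  have ha_le : ∀ i, a ≤ w i := fun i => Finset.inf'_le _ (Finset.mem_univ i)
  set S : ℝ := ∑ i, w i with hS_def
  set b : ℝ := max a (S / N) with hb_def
  have hab : a ≤ b := le_max_left _ _
  have hb_pos : 0 < b := lt_of_lt_of_le ha_pos hab
  set f : ℝ → ℝ := fun lam => ∑ i, min (w i / lam) 1 with hf_def
  have hcont : ContinuousOn f (Set.Icc a b) := by
    apply continuousOn_finset_sum
    intro i _
    have h1 : ContinuousOn (fun lam : ℝ => w i / lam) (Set.Icc a b) :=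
      continuousOn_const.div continuousOn_id
        (fun x hx => ne_of_gt (lt_of_lt_of_le ha_pos hx.1))
    exact fun x hx => (h1 x hx).min continuousWithinAt_const
  have hfa : f a = M := by
    rw [hf_def]
    simp only
    have : ∀ i ∈ Finset.univ, min (w i / a) 1 = 1 := by
      intro i _
      rw [min_eq_right]
      rw [le_div_iff₀ ha_pos]
      simpa using ha_le i
    rw [Finset.sum_congr rfl this]
    simp
  have hfb : f b ≤ N := by
    have h1 : f b ≤ S / b := by
      rw [hf_def, hS_def, Finset.sum_div]
      apply Finset.sum_le_sum
      intro i _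
      exact min_le_left _ _
    have h2 : S / b ≤ N := by
      rw [div_le_iff₀ hb_pos]
      have : S / N ≤ b := le_max_right _ _
      calc S = (S / N) * N := by field_simp
        _ ≤ b * N := by nlinarith [hN0]
        _ = N * b := mul_comm _ _
    linarith
  have hmem : N ∈ Set.Icc (f b) (f a) := ⟨hfb, by rw [hfa]; exact hNM.le⟩
  obtain ⟨lam, hlam_mem, hlam_eq⟩ := intermediate_value_Icc' hab hcont hmem
  exact ⟨lam, lt_of_lt_of_le ha_pos hlam_mem.1, hlam_eq⟩
end

section
/- Let w_1,…,w_M be strictly positive real numbers and let N be a real number with 0 < N < M. Then there exists λ > 0 such that Σ_{i=1}^M min(√(w_i/λ), 1) = N. (Existence of the threshold λ in the Chi-Squared Optimal Selection (CS-OS) resampling scheme.) -/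
/-!
The map `λ ↦ Σ_i min(√(w_i/λ), 1)` is continuous on `(0, ∞)`, equals `M` once `λ` is below
every weight, and tends to `0` as `λ → ∞`; the intermediate value theorem on the connected
set `(0, ∞)` then produces the threshold.
-/

open Filter Set Topology

variable {ι : Type*} [Fintype ι]

/-- The expected number of particles kept by CS-OS resampling at threshold `lam`. -/
noncomputable def selectionMass (w : ι → ℝ) (lam : ℝ) : ℝ :=
  ∑ i, min (Real.sqrt (w i / lam)) 1

theorem continuousOn_selectionMass (w : ι → ℝ) : ContinuousOn (selectionMass w) (Ioi 0) :=
  continuousOn_finsetSum _ fun _ _ =>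
    (ContinuousOn.sqrt (continuousOn_const.div continuousOn_id fun _ hx => ne_of_gt hx)).inf
      continuousOn_const

theorem selectionMass_eq_card {w : ι → ℝ} {lam : ℝ} (hlam : 0 < lam) (hle : ∀ i, lam ≤ w i) :
    selectionMass w lam = Fintype.card ι := by
  have hone : ∀ i, min (Real.sqrt (w i / lam)) 1 = 1 := fun i =>
    min_eq_right (Real.one_le_sqrt.mpr ((one_le_div hlam).mpr (hle i)))
  simp [selectionMass, hone]

theorem eventually_selectionMass_eq_card {w : ι → ℝ} (hw : ∀ i, 0 < w i) :
    ∀ᶠ lam in 𝓝[>] 0, selectionMass w lam = Fintype.card ι := by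
  have hle : ∀ᶠ lam in 𝓝[>] (0 : ℝ), ∀ i, lam ≤ w i :=
    eventually_all.mpr fun i =>
      mem_of_superset (Ioo_mem_nhdsGT (hw i)) fun _ hx => hx.2.le
  filter_upwards [self_mem_nhdsWithin, hle] with lam hpos hle
  exact selectionMass_eq_card hpos hle

theorem tendsto_selectionMass_atTop (w : ι → ℝ) :
    Tendsto (selectionMass w) atTop (𝓝 0) := by
  have hterm : ∀ i, Tendsto (fun lam => min (Real.sqrt (w i / lam)) 1) atTop (𝓝 0) := by
    intro i
    have hsqrt : Tendsto (fun lam => Real.sqrt (w i / lam)) atTop (𝓝 0) := by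
      simpa using (tendsto_const_nhds.div_atTop tendsto_id).sqrt
    simpa using hsqrt.min (tendsto_const_nhds (x := (1 : ℝ)))
  have hsum := tendsto_finsetSum Finset.univ fun i _ => hterm i
  rwa [Finset.sum_const_zero] at hsum

/-- **Existence of the CS-OS threshold.**  For strictly positive weights `w_1,…,w_M` and
`0 < N < M` there is `λ > 0` with `Σ_i min(√(w_i/λ), 1) = N`. -/
theorem csos_threshold_exists {M : ℕ} (w : Fin M → ℝ) (hw : ∀ i, 0 < w i)
    (N : ℝ) (hN0 : 0 < N) (hNM : N < M) :
    ∃ lam : ℝ, 0 < lam ∧ (∑ i, min (Real.sqrt (w i / lam)) 1) = N := by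
  obtain ⟨a, hfa, ha⟩ :=
    ((eventually_selectionMass_eq_card hw).and (self_mem_nhdsWithin (s := Ioi 0))).exists
  obtain ⟨b, hb, hfb⟩ :=
    ((eventually_gt_atTop 0).and
      ((tendsto_selectionMass_atTop w).eventually (gt_mem_nhds hN0))).exists
  have hN : N ∈ Icc (selectionMass w b) (selectionMass w a) := by
    rw [hfa, Fintype.card_fin]
    exact ⟨hfb.le, hNM.le⟩
  obtain ⟨lam, hlam, hflam⟩ :=
    isPreconnected_Ioi.intermediate_value hb ha (continuousOn_selectionMass w) hN
  exact ⟨lam, hlam, hflam⟩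
end
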